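/- Let G be a group generated by a finite set, H ≤ G a subgroup, and suppose H is ε-quasiconvex with respect to the word metric. Then H is generated by the set of its elements of word length at most 2ε+1; in particular H is finitely generated. -/

import Mathlib

open Pointwise

variable {G : Type*} [Group G]

/-- Word length of `g` with respect to a (symmetrized) generating set `S`. -/
noncomputable def wordLength (S : Set G) (g : G) : ℕ :=
  sInf {n | ∃ l : List G, (∀ x ∈ l, x ∈ S) ∧ l.length = n ∧ l.prod = g}

/-- Word metric (distance in the Cayley graph). -/
noncomputable def wdist (S : Set G) (g h : G) : ℕ := wordLength S (g⁻¹ * h)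

/-- A discrete geodesic of length `n` in the Cayley graph of `G` w.r.t. `S`. -/
def IsGeodesic (S : Set G) (p : ℕ → G) (n : ℕ) : Prop :=
  ∀ i j : ℕ, i ≤ j → j ≤ n → wdist S (p i) (p j) = j - i

/-- `Q` is `ε`-quasiconvex: every geodesic between two elements of `Q`
lies in the closed `ε`-neighborhood of `Q`. -/
def IsQuasiconvex (S : Set G) (ε : ℝ) (Q : Set G) : Prop :=
  ∀ (p : ℕ → G) (n : ℕ), IsGeodesic S p n → p 0 ∈ Q → p n ∈ Q →
    ∀ i ≤ n, ∃ q ∈ Q, (wdist S (p i) q : ℝ) ≤ ε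

/-- All geodesic triangles in the Cayley graph are `δ`-slim. -/
def SlimTriangles (S : Set G) (δ : ℝ) : Prop :=
  ∀ (p q r : ℕ → G) (np nq nr : ℕ),
    IsGeodesic S p np → IsGeodesic S q nq → IsGeodesic S r nr →
    p np = q 0 → r 0 = p 0 → r nr = q nq →
    ∀ i ≤ nr, ∃ j : ℕ, (j ≤ np ∧ (wdist S (r i) (p j) : ℝ) ≤ δ) ∨
                       (j ≤ nq ∧ (wdist S (r i) (q j) : ℝ) ≤ δ)

lemma wl_le (S : Set G) {g : G} {l : List G} (hl : ∀ x ∈ l, x ∈ S) (hp : l.prod = g) :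
    wordLength S g ≤ l.length :=
  Nat.sInf_le ⟨l, hl, rfl, hp⟩

lemma exists_word (S : Set G) (hSsym : S⁻¹ = S) (hSgen : Subgroup.closure S = ⊤) (g : G) :
    ∃ l : List G, (∀ x ∈ l, x ∈ S) ∧ l.prod = g := by
  have hg : g ∈ Subgroup.closure S := hSgen ▸ Subgroup.mem_top g
  have hg' : g ∈ Submonoid.closure S := by
    have := Subgroup.closure_toSubmonoid S
    rw [hSsym, Set.union_self] at this
    rw [← this]
    exact hg
  exact Submonoid.exists_list_of_mem_closure hg'

lemma wl_spec (S : Set G) (hSsym : S⁻¹ = S) (hSgen : Subgroup.closure S = ⊤) (g : G) :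
    ∃ l : List G, (∀ x ∈ l, x ∈ S) ∧ l.length = wordLength S g ∧ l.prod = g := by
  have hne : {n | ∃ l : List G, (∀ x ∈ l, x ∈ S) ∧ l.length = n ∧ l.prod = g}.Nonempty := by
    obtain ⟨l, hl, hp⟩ := exists_word S hSsym hSgen g
    exact ⟨l.length, l, hl, rfl, hp⟩
  have := Nat.sInf_mem hne
  obtain ⟨l, hl, hlen, hp⟩ := this
  exact ⟨l, hl, hlen, hp⟩

lemma wl_one (S : Set G) : wordLength S 1 = 0 :=
  Nat.le_zero.mp (wl_le S (l := []) (by simp) (by simp))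

lemma wl_mul_le (S : Set G) (hSsym : S⁻¹ = S) (hSgen : Subgroup.closure S = ⊤) (a b : G) :
    wordLength S (a * b) ≤ wordLength S a + wordLength S b := by
  obtain ⟨la, hla, hlena, hpa⟩ := wl_spec S hSsym hSgen a
  obtain ⟨lb, hlb, hlenb, hpb⟩ := wl_spec S hSsym hSgen b
  calc wordLength S (a * b) ≤ (la ++ lb).length := by
        refine wl_le S (fun x hx => ?_) (by simp [hpa, hpb])
        rcases List.mem_append.mp hx with h | h
        exacts [hla x h, hlb x h]
    _ = _ := by simp [hlena, hlenb]

lemma wl_inv (S : Set G) (hSsym : S⁻¹ = S) (hSgen : Subgroup.closure S = ⊤) (g : G) :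
    wordLength S g⁻¹ ≤ wordLength S g := by
  obtain ⟨l, hl, hlen, hp⟩ := wl_spec S hSsym hSgen g
  refine le_trans (wl_le S (l := (l.map (·⁻¹)).reverse) (fun x hx => ?_) ?_) (by simp [hlen])
  · simp only [List.mem_reverse, List.mem_map] at hx
    obtain ⟨y, hy, rfl⟩ := hx
    rw [← hSsym]; simpa using hl y hy
  · rw [List.prod_reverse_noncomm]; simp [hp]

lemma wdist_symm (S : Set G) (hSsym : S⁻¹ = S) (hSgen : Subgroup.closure S = ⊤) (a b : G) :
    wdist S a b = wdist S b a := by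
  have h1 := wl_inv S hSsym hSgen (a⁻¹ * b)
  have h2 := wl_inv S hSsym hSgen (b⁻¹ * a)
  simp only [mul_inv_rev, inv_inv] at h1 h2
  unfold wdist
  omega

lemma wdist_triangle (S : Set G) (hSsym : S⁻¹ = S) (hSgen : Subgroup.closure S = ⊤) (a b c : G) :
    wdist S a c ≤ wdist S a b + wdist S b c := by
  have := wl_mul_le S hSsym hSgen (a⁻¹ * b) (b⁻¹ * c)
  simpa [wdist, mul_assoc] using this

lemma geodesic_of_min_word (S : Set G) (hSsym : S⁻¹ = S) (hSgen : Subgroup.closure S = ⊤)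
    {l : List G} {h : G} (hl : ∀ x ∈ l, x ∈ S) (hp : l.prod = h)
    (hmin : l.length = wordLength S h) :
    IsGeodesic S (fun i => (l.take i).prod) l.length := by
  have upper : ∀ a b : ℕ, a ≤ b → b ≤ l.length →
      wdist S ((l.take a).prod) ((l.take b).prod) ≤ b - a := by
    intro a b hab hbn
    have hsplit : l.take b = l.take a ++ (l.take b).drop a := by
      conv_lhs => rw [← List.take_append_drop a (l.take b)]
      rw [List.take_take, min_eq_left hab]
    have hprod : ((l.take a).prod)⁻¹ * (l.take b).prod = ((l.take b).drop a).prod := by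
      conv_lhs => rw [hsplit]
      rw [List.prod_append]
      group
    have hlen : ((l.take b).drop a).length = b - a := by
      simp [List.length_drop, List.length_take, Nat.min_eq_left hbn]
    unfold wdist
    rw [hprod]
    exact hlen ▸ wl_le S (fun x hx => hl x (List.mem_of_mem_take (List.mem_of_mem_drop hx))) rfl
  intro i j hij hjn
  show wdist S ((l.take i).prod) ((l.take j).prod) = j - i
  refine le_antisymm (upper i j hij hjn) ?_
  have h0n : wdist S ((l.take 0).prod) ((l.take l.length).prod) = l.length := by
    simp [wdist, List.take_length, hp, ← hmin]
  have t1 := wdist_triangle S hSsym hSgen ((l.take 0).prod) ((l.take i).prod) ((l.take j).prod)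
  have t2 := wdist_triangle S hSsym hSgen ((l.take 0).prod) ((l.take j).prod)
    ((l.take l.length).prod)
  have u1 := upper 0 i (Nat.zero_le _) (le_trans hij hjn)
  have u2 := upper j l.length hjn le_rfl
  omega

lemma prod_telescope : ∀ (n : ℕ) (f : ℕ → G),
    (List.ofFn (fun i : Fin n => (f i)⁻¹ * f (i + 1))).prod = (f 0)⁻¹ * f n := by
  intro n
  induction n with
  | zero => simp
  | succ n ih =>
    intro f
    rw [List.ofFn_succ]
    simp only [Fin.val_zero, Fin.val_succ, List.prod_cons]
    have := ih (fun k => f (k + 1))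
    rw [this]
    group

lemma ball_finite (S : Set G) (hSfin : S.Finite) (hSsym : S⁻¹ = S)
    (hSgen : Subgroup.closure S = ⊤) (N : ℕ) :
    {g : G | wordLength S g ≤ N}.Finite := by
  haveI := hSfin.to_subtype
  have hfin : ((fun t : List ↥S => (t.map ((↑) : ↥S → G)).prod) ''
      {t : List ↥S | t.length ≤ N}).Finite :=
    (List.finite_length_le ↥S N).image _
  refine hfin.subset ?_
  intro g hg
  simp only [Set.mem_setOf_eq] at hg
  obtain ⟨l, hl, hlen, hp⟩ := wl_spec S hSsym hSgen g
  refine ⟨l.pmap (fun x hx => (⟨x, hx⟩ : ↥S)) hl, ?_, ?_⟩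
  · simp only [Set.mem_setOf_eq, List.length_pmap]
    omega
  · simp only [List.map_pmap]
    simp [hp]


/-- A quasiconvex subgroup `H` is generated by its elements of word length at most
`2ε+1`; in particular `H` is finitely generated, and every `h ∈ H` of word length `r`
is a product of `r` such generators. -/
theorem quasiconvex_subgroup_fg (S : Set G) (hSfin : S.Finite) (hSsym : S⁻¹ = S)
    (hSgen : Subgroup.closure S = ⊤) (H : Subgroup G) (ε : ℝ) (hε : 0 ≤ ε)
    (hq : IsQuasiconvex S ε (H : Set G)) :
    Subgroup.closure {h : G | h ∈ H ∧ (wordLength S h : ℝ) ≤ 2 * ε + 1} = H ∧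
    H.FG ∧
    ∀ h ∈ H, ∃ l : List G,
      (∀ x ∈ l, x ∈ H ∧ (wordLength S x : ℝ) ≤ 2 * ε + 1) ∧
      l.length = wordLength S h ∧ l.prod = h := by
  classical
  -- main claim
  have claim : ∀ h ∈ H, ∃ l : List G,
      (∀ x ∈ l, x ∈ H ∧ (wordLength S x : ℝ) ≤ 2 * ε + 1) ∧
      l.length = wordLength S h ∧ l.prod = h := by
    intro h hH
    obtain ⟨l, hl, hlen, hp⟩ := wl_spec S hSsym hSgen h
    set n := l.length with hn
    set p : ℕ → G := fun i => (l.take i).prod with hpdef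
    have hgeo : IsGeodesic S p n := geodesic_of_min_word S hSsym hSgen hl hp hlen
    have hp0 : p 0 = 1 := by simp [hpdef]
    have hpn : p n = h := by simp [hpdef, hn, List.take_length, hp]
    have hqc := hq p n hgeo (by rw [hp0]; exact H.one_mem) (by rw [hpn]; exact hH)
    set c : ℕ → G := fun i =>
      if i = 0 then 1 else if i = n then h else
        if hi : i ≤ n then (hqc i hi).choose else 1 with hcdef
    have hc0 : c 0 = 1 := by simp [hcdef]
    have hcn : c n = h := by
      by_cases h0 : n = 0
      · have : h = 1 := by
          rw [← hp]
          rw [hn] at h0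
          simp [List.length_eq_zero_iff.mp h0]
        simp [hcdef, h0, this]
      · simp [hcdef, h0]
    have hcH : ∀ i ≤ n, c i ∈ H := by
      intro i hi
      rcases eq_or_ne i 0 with rfl | h0
      · rw [hc0]; exact H.one_mem
      rcases eq_or_ne i n with rfl | hin
      · rw [hcn]; exact hH
      · simp only [hcdef, h0, hin, if_false, dif_pos hi]
        exact (hqc i hi).choose_spec.1
    have hcd : ∀ i ≤ n, (wdist S (p i) (c i) : ℝ) ≤ ε := by
      intro i hi
      rcases eq_or_ne i 0 with rfl | h0
      · rw [hc0, hp0]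
        simp [wdist, wl_one]
        exact hε
      rcases eq_or_ne i n with rfl | hin
      · rw [hcn, hpn]
        simp [wdist, wl_one]
        exact hε
      · simp only [hcdef, h0, hin, if_false, dif_pos hi]
        exact (hqc i hi).choose_spec.2
    refine ⟨List.ofFn (fun i : Fin n => (c i)⁻¹ * c (i + 1)), ?_, ?_, ?_⟩
    · intro x hx
      obtain ⟨i, rfl⟩ := List.mem_ofFn.mp hx
      have hi1 : (i : ℕ) + 1 ≤ n := i.2
      have hi0 : (i : ℕ) ≤ n := le_of_lt i.2
      constructor
      · exact H.mul_mem (H.inv_mem (hcH i hi0)) (hcH (i + 1) hi1)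
      · have key : (c i)⁻¹ * c (i + 1) =
            ((p i)⁻¹ * c i)⁻¹ * ((p i)⁻¹ * p (i + 1)) * ((p (i + 1))⁻¹ * c (i + 1)) := by
          group
        have b1 : wordLength S ((c i)⁻¹ * c (i + 1)) ≤
            wdist S (p i) (c i) + wdist S (p i) (p (i + 1)) + wdist S (p (i + 1)) (c (i + 1)) := by
          rw [key]
          calc wordLength S _ ≤ wordLength S (((p i)⁻¹ * c i)⁻¹ * ((p i)⁻¹ * p (i+1)))
                + wordLength S ((p (i+1))⁻¹ * c (i+1)) := wl_mul_le S hSsym hSgen _ _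
            _ ≤ wordLength S ((p i)⁻¹ * c i)⁻¹ + wordLength S ((p i)⁻¹ * p (i+1))
                + wordLength S ((p (i+1))⁻¹ * c (i+1)) := by
                have := wl_mul_le S hSsym hSgen (((p i)⁻¹ * c i)⁻¹) ((p i)⁻¹ * p (i+1))
                omega
            _ ≤ _ := by
                have := wl_inv S hSsym hSgen ((p i)⁻¹ * c i)
                unfold wdist
                omega
        have b2 : wdist S (p i) (p (i + 1)) = 1 := by
          have := hgeo i (i + 1) (Nat.le_succ i) hi1
          omega
        have d1 := hcd i hi0
        have d2 := hcd (i + 1) hi1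
        have : (wordLength S ((c i)⁻¹ * c (i + 1)) : ℝ) ≤
            (wdist S (p i) (c i) : ℝ) + (wdist S (p i) (p (i+1)) : ℝ)
              + (wdist S (p (i+1)) (c (i+1)) : ℝ) := by
          push_cast
          exact_mod_cast Nat.cast_le.mpr b1
        rw [b2] at this
        linarith
    · simp [hlen]
    · rw [prod_telescope n c, hc0, hcn]
      simp
  refine ⟨?_, ?_, claim⟩
  · apply le_antisymm
    · exact (Subgroup.closure_le H).mpr (fun x hx => hx.1)
    · intro h hH
      obtain ⟨l, hmem, _, hp⟩ := claim h hH
      rw [← hp]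
      exact list_prod_mem (fun x hx => Subgroup.subset_closure (hmem x hx))
  · refine (Subgroup.fg_iff _).mpr
      ⟨{h : G | h ∈ H ∧ (wordLength S h : ℝ) ≤ 2 * ε + 1}, ?_, ?_⟩
    · apply le_antisymm
      · exact (Subgroup.closure_le H).mpr (fun x hx => hx.1)
      · intro h hH
        obtain ⟨l, hmem, _, hp⟩ := claim h hH
        rw [← hp]
        exact list_prod_mem (fun x hx => Subgroup.subset_closure (hmem x hx))
    · refine (ball_finite S hSfin hSsym hSgen (Nat.floor (2 * ε + 1))).subset ?_
      intro g hg
      simp only [Set.mem_setOf_eq] at hg ⊢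
      exact Nat.le_floor hg.2
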